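/- arXiv:2109.08506 — 2 statements merged into one kernel-verified Lean document; each statement's English description precedes it below -/
import Mathlib

section
/- Let (M,μ) be a σ-finite measure space and f₁, f₂ : M → [−∞,∞] measurable functions whose distribution functions are finite for every s > 0. Suppose the supports of f₁ and f₂ are disjoint, μ(supp f₁) = z < ∞, and |f₁(x)| ≥ ‖f₂‖_∞ for μ-a.e. x with f₁(x) ≠ 0. Then: (i) (f₁+f₂)^*(u) = f₁^*(u) for 0 < u < z; (ii) (f₁+f₂)^*(u) = f₂^*(u−z) for u > z; (iii) (f₁+f₂)^{**}(u) = f₁^{**}(u) for 0 < u ≤ z. -/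
open MeasureTheory
open scoped ENNReal

noncomputable section

/-- The distribution function `m_f(s) = μ({x : |f(x)| > s})`. -/
def distFn {M : Type*} [MeasurableSpace M] (μ : Measure M) (f : M → ℝ) (s : ℝ) : ℝ≥0∞ :=
  μ {x | s < |f x|}

/-- The decreasing rearrangement `f^*(t) = inf {s ≥ 0 : m_f(s) ≤ t}`. -/
def rearr {M : Type*} [MeasurableSpace M] (μ : Measure M) (f : M → ℝ) (t : ℝ) : ℝ :=
  sInf {s : ℝ | 0 ≤ s ∧ distFn μ f s ≤ ENNReal.ofReal t}

/-- The maximal function `f^{**}(t) = (1/t) ∫₀^t f^*(u) du`. -/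
def rearrMax {M : Type*} [MeasurableSpace M] (μ : Measure M) (f : M → ℝ) (t : ℝ) : ℝ :=
  (1 / t) * ∫ u in Set.Ioc (0 : ℝ) t, rearr μ f u

/-!
With disjoint supports, `{|f₁ + f₂| > s} = {|f₁| > s} ⊔ {|f₂| > s}`, so the distribution functions
add. Write `N = ‖f₂‖_∞`. For `s ≥ N` the set `{|f₂| > s}` is null, so `m_{f₁+f₂}(s) = m_{f₁}(s)`;
for `s < N` the domination hypothesis gives `{|f₁| > s} = supp f₁` a.e., so
`m_{f₁+f₂}(s) = z + m_{f₂}(s)`. Comparing the sublevel conditions `m(s) ≤ u` in these two regimes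
gives (i) and (ii), and (iii) follows from (i) since `{z}` is Lebesgue-null.
-/

lemma rearr_eq_of_distFn_le_iff {M : Type*} [MeasurableSpace M] {μ ν : Measure M} {f g : M → ℝ}
    {t t' : ℝ}
    (h : ∀ s, 0 ≤ s → (distFn μ f s ≤ ENNReal.ofReal t ↔ distFn ν g s ≤ ENNReal.ofReal t')) :
    rearr μ f t = rearr ν g t' := by
  unfold rearr
  congr 1
  ext s
  exact and_congr_right (h s)

lemma rearrMax_eq_of_eqOn {M : Type*} [MeasurableSpace M] {μ ν : Measure M} {f g : M → ℝ} {u : ℝ}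
    (h : Set.EqOn (rearr μ f) (rearr ν g) (Set.Ioo 0 u)) : rearrMax μ f u = rearrMax ν g u := by
  unfold rearrMax
  rw [integral_Ioc_eq_integral_Ioo, integral_Ioc_eq_integral_Ioo,
    setIntegral_congr_fun measurableSet_Ioo h]

section DisjointSupports

variable {M : Type*} {f g : M → ℝ} {s : ℝ}

lemma setOf_lt_abs_subset_support (hs : 0 ≤ s) : {x | s < |f x|} ⊆ Function.support f := by
  intro x hx hfx
  simp only [Set.mem_ofPred_eq, hfx, abs_zero] at hx
  linarith

lemma setOf_lt_abs_add_of_disjoint (hdisj : Disjoint (Function.support f) (Function.support g))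
    (s : ℝ) : {x | s < |(f + g) x|} = {x | s < |f x|} ∪ {x | s < |g x|} := by
  ext x
  have hzero : f x = 0 ∨ g x = 0 := by
    by_contra! h
    exact Set.disjoint_left.mp hdisj h.1 h.2
  have habs {y : ℝ} (hs : s < 0) : s < |y| := hs.trans_le (abs_nonneg y)
  rcases hzero with h | h <;>
    simp only [Set.mem_ofPred_eq, Set.mem_union, Pi.add_apply, h, zero_add, add_zero, abs_zero]
  · exact (or_iff_right_of_imp habs).symm
  · exact (or_iff_left_of_imp habs).symm

variable [MeasurableSpace M] {μ : Measure M}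

lemma distFn_le_measure_support (hs : 0 ≤ s) : distFn μ f s ≤ μ (Function.support f) :=
  measure_mono (setOf_lt_abs_subset_support hs)

lemma distFn_add_of_disjoint (hg : Measurable g)
    (hdisj : Disjoint (Function.support f) (Function.support g)) (hs : 0 ≤ s) :
    distFn μ (f + g) s = distFn μ f s + distFn μ g s := by
  unfold distFn
  rw [setOf_lt_abs_add_of_disjoint hdisj]
  exact measure_union (hdisj.mono (setOf_lt_abs_subset_support hs)
    (setOf_lt_abs_subset_support hs)) (measurableSet_lt measurable_const hg.abs)

lemma distFn_eq_zero_of_eLpNorm_top_le (hs : 0 ≤ s) (hN : eLpNorm g ⊤ μ ≤ ENNReal.ofReal s) :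
    distFn μ g s = 0 := by
  have hae : ∀ᵐ x ∂μ, |g x| ≤ s := by
    filter_upwards [enorm_ae_le_eLpNormEssSup g μ] with x hx
    rw [Real.enorm_eq_ofReal_abs, ← eLpNorm_exponent_top] at hx
    exact (ENNReal.ofReal_le_ofReal_iff hs).mp (hx.trans hN)
  simpa only [distFn, ae_iff, not_le] using hae

lemma distFn_eq_measure_support {c : ℝ≥0∞}
    (hbound : ∀ᵐ x ∂μ, f x ≠ 0 → c ≤ ENNReal.ofReal |f x|) (hs : 0 ≤ s)
    (hsc : ENNReal.ofReal s < c) : distFn μ f s = μ (Function.support f) := by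
  refine le_antisymm (distFn_le_measure_support hs) (measure_mono_ae ?_)
  filter_upwards [hbound] with x hx hfx
  exact (ENNReal.ofReal_lt_ofReal_iff_of_nonneg hs).mp (hsc.trans_le (hx hfx))

lemma distFn_add_of_eLpNorm_top_le (hdisj : Disjoint (Function.support f) (Function.support g))
    (hs : 0 ≤ s) (hN : eLpNorm g ⊤ μ ≤ ENNReal.ofReal s) : distFn μ (f + g) s = distFn μ f s := by
  rw [distFn, setOf_lt_abs_add_of_disjoint hdisj]
  exact measure_congr (union_ae_eq_left_of_ae_eq_empty
    (ae_eq_empty.mpr (distFn_eq_zero_of_eLpNorm_top_le hs hN)))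

lemma distFn_add_of_lt_eLpNorm_top (hg : Measurable g)
    (hdisj : Disjoint (Function.support f) (Function.support g))
    (hbound : ∀ᵐ x ∂μ, f x ≠ 0 → eLpNorm g ⊤ μ ≤ ENNReal.ofReal |f x|) (hs : 0 ≤ s)
    (hsN : ENNReal.ofReal s < eLpNorm g ⊤ μ) :
    distFn μ (f + g) s = μ (Function.support f) + distFn μ g s := by
  rw [distFn_add_of_disjoint hg hdisj hs, distFn_eq_measure_support hbound hs hsN]

lemma rearr_add_of_lt_measure_support (hg : Measurable g)
    (hdisj : Disjoint (Function.support f) (Function.support g))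
    (hbound : ∀ᵐ x ∂μ, f x ≠ 0 → eLpNorm g ⊤ μ ≤ ENNReal.ofReal |f x|) {u : ℝ}
    (hu : ENNReal.ofReal u < μ (Function.support f)) : rearr μ (f + g) u = rearr μ f u := by
  refine rearr_eq_of_distFn_le_iff fun s hs => ?_
  rcases lt_or_ge (ENNReal.ofReal s) (eLpNorm g ⊤ μ) with hsN | hNs
  · rw [distFn_add_of_lt_eLpNorm_top hg hdisj hbound hs hsN,
      distFn_eq_measure_support hbound hs hsN]
    exact iff_of_false (fun h => hu.not_ge (le_self_add.trans h)) hu.not_ge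
  · rw [distFn_add_of_eLpNorm_top_le hdisj hs hNs]

lemma rearr_add_of_measure_support_le (hg : Measurable g)
    (hdisj : Disjoint (Function.support f) (Function.support g))
    (hbound : ∀ᵐ x ∂μ, f x ≠ 0 → eLpNorm g ⊤ μ ≤ ENNReal.ofReal |f x|)
    {z u : ℝ} (hz : 0 ≤ z)
    (hsupp : μ (Function.support f) = ENNReal.ofReal z) (hzu : z ≤ u) :
    rearr μ (f + g) u = rearr μ g (u - z) := by
  have hzu' : ENNReal.ofReal z ≤ ENNReal.ofReal u := ENNReal.ofReal_le_ofReal hzu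
  refine rearr_eq_of_distFn_le_iff fun s hs => ?_
  rw [ENNReal.ofReal_sub u hz]
  rcases lt_or_ge (ENNReal.ofReal s) (eLpNorm g ⊤ μ) with hsN | hNs
  · rw [distFn_add_of_lt_eLpNorm_top hg hdisj hbound hs hsN, hsupp,
      ENNReal.le_sub_iff_add_le_left ENNReal.ofReal_ne_top hzu']
  · rw [distFn_add_of_eLpNorm_top_le hdisj hs hNs, distFn_eq_zero_of_eLpNorm_top_le hs hNs]
    exact iff_of_true ((distFn_le_measure_support hs).trans (hsupp ▸ hzu')) zero_le

end DisjointSupports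

theorem rearrangement_sum_disjoint_supports_general
    {M : Type*} [MeasurableSpace M] (μ : Measure M)
    (f₁ f₂ : M → ℝ) (h₂ : Measurable f₂)
    (hdisj : Disjoint (Function.support f₁) (Function.support f₂))
    (z : ℝ) (hz : 0 ≤ z) (hsupp : μ (Function.support f₁) = ENNReal.ofReal z)
    (hbound : ∀ᵐ x ∂μ, f₁ x ≠ 0 → eLpNorm f₂ ⊤ μ ≤ ENNReal.ofReal |f₁ x|) :
    (∀ u : ℝ, 0 < u → u < z → rearr μ (f₁ + f₂) u = rearr μ f₁ u) ∧
    (∀ u : ℝ, z < u → rearr μ (f₁ + f₂) u = rearr μ f₂ (u - z)) ∧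
    (∀ u : ℝ, 0 < u → u ≤ z → rearrMax μ (f₁ + f₂) u = rearrMax μ f₁ u) := by
  have below_z : ∀ u : ℝ, 0 < u → u < z → rearr μ (f₁ + f₂) u = rearr μ f₁ u :=
    fun u hu huz => rearr_add_of_lt_measure_support h₂ hdisj hbound <| by
      rw [hsupp]
      exact (ENNReal.ofReal_lt_ofReal_iff (hu.trans huz)).mpr huz
  refine ⟨below_z, fun u hzu => rearr_add_of_measure_support_le h₂ hdisj hbound hz hsupp hzu.le,
    fun u _ huz => rearrMax_eq_of_eqOn fun t ht => below_z t ht.1 (ht.2.trans_le huz)⟩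

/-- Rearrangement of a sum of two functions with disjoint supports, the first dominating
the sup-norm of the second on its support. -/
theorem rearrangement_sum_disjoint_supports
    {M : Type*} [MeasurableSpace M] (μ : Measure M) [SigmaFinite μ]
    (f₁ f₂ : M → ℝ) (h₁ : Measurable f₁) (h₂ : Measurable f₂)
    (hd₁ : ∀ s > (0 : ℝ), distFn μ f₁ s < ⊤) (hd₂ : ∀ s > (0 : ℝ), distFn μ f₂ s < ⊤)
    (hdisj : Disjoint (Function.support f₁) (Function.support f₂))
    (z : ℝ) (hz : 0 ≤ z) (hsupp : μ (Function.support f₁) = ENNReal.ofReal z)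
    (hbound : ∀ᵐ x ∂μ, f₁ x ≠ 0 → eLpNorm f₂ ⊤ μ ≤ ENNReal.ofReal |f₁ x|) :
    (∀ u : ℝ, 0 < u → u < z → rearr μ (f₁ + f₂) u = rearr μ f₁ u) ∧
    (∀ u : ℝ, z < u → rearr μ (f₁ + f₂) u = rearr μ f₂ (u - z)) ∧
    (∀ u : ℝ, 0 < u → u ≤ z → rearrMax μ (f₁ + f₂) u = rearrMax μ f₁ u) :=
  rearrangement_sum_disjoint_supports_general μ f₁ f₂ h₂ hdisj z hz hsupp hbound
end
end

section
/- Let n ≥ 1 be an integer, α ∈ (0,n), H > 0, and let K : ℝ^n∖{0} → ℝ be measurable with |K(x)| ≤ H|x|^{α−n} for all x ≠ 0. Then there exists C = C(n,α,H) > 0 such that for every τ > 0, every measurable f : ℝ^n → ℝ supported in a set of Lebesgue measure at most τ with ‖f‖_{L^{n/α}(ℝ^n)} ≤ 1, and every R > 0, the average of |Tf| over the annulus A_R = {x : R ≤ |x| ≤ 2R} satisfies (1/|A_R|) ∫_{A_R} |Tf(x)| dx ≤ C R^{α−n} τ^{(n−α)/n}, where Tf(x) = ∫_{ℝ^n} K(x−y)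 f(y) dy. -/
/-!
Dominate `|K|` by the Riesz kernel `H |x|^{α-n}` and exchange the order of integration (Tonelli):
`∫_{A_R} |Tf| ≤ H ‖f‖₁ sup_y ∫_{A_R} |x - y|^{α-n} dx`. Split the inner integral at the ball
`B(y, R)`: near `y` it is at most `∫_{B(0,R)} |x|^{α-n} dx`, which by scaling is `R^α` times the
(finite, since `α > 0`) integral over the unit ball; away from `y` the integrand is at most
`R^{α-n}` on a set of measure `|A_R|`. Hölder's inequality on the support gives
`‖f‖₁ ≤ ‖f‖_{n/α} |S|^{1-α/n} ≤ τ^{(n-α)/n}`, and `|A_R| = (2^n - 1) |B(0,1)| R^n`.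
-/

open MeasureTheory Metric
open scoped ENNReal

noncomputable section

/-- The convolution operator `Tf(x) = ∫ K(x-y) f(y) dy`. -/
def conv {n : ℕ} (K f : EuclideanSpace ℝ (Fin n) → ℝ) (x : EuclideanSpace ℝ (Fin n)) : ℝ :=
  ∫ y, K (x - y) * f y

open Set Module

section Translation

variable {G : Type*} [NormedAddCommGroup G] [MeasurableSpace G] [BorelSpace G]
  (μ : Measure G) [μ.IsAddRightInvariant]

theorem setLIntegral_rpow_norm_sub_le {s : ℝ} (hs : s ≤ 0) {A : Set G} (hA : MeasurableSet A)
    (y : G) {ρ : ℝ} (hρ : 0 < ρ) :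
    ∫⁻ x in A, ENNReal.ofReal (‖x - y‖ ^ s) ∂μ ≤
      ∫⁻ x in ball (0 : G) ρ, ENNReal.ofReal (‖x‖ ^ s) ∂μ + ENNReal.ofReal (ρ ^ s) * μ A := by
  have hnear : ∫⁻ x in ball y ρ, ENNReal.ofReal (‖x - y‖ ^ s) ∂μ =
      ∫⁻ x in ball (0 : G) ρ, ENNReal.ofReal (‖x‖ ^ s) ∂μ := by
    rw [← lintegral_indicator measurableSet_ball, ← lintegral_indicator measurableSet_ball]
    refine Eq.trans ?_ (lintegral_sub_right_eq_self _ y)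
    congr 1 with x
    simp [indicator, dist_eq_norm]
  have hfar : ∀ x ∈ A \ ball y ρ, ENNReal.ofReal (‖x - y‖ ^ s) ≤ ENNReal.ofReal (ρ ^ s) := by
    intro x hx
    have : ρ ≤ ‖x - y‖ := by simpa [dist_eq_norm] using hx.2
    exact ENNReal.ofReal_le_ofReal (Real.rpow_le_rpow_of_nonpos hρ this hs)
  calc ∫⁻ x in A, ENNReal.ofReal (‖x - y‖ ^ s) ∂μ
      ≤ ∫⁻ x in ball y ρ ∪ A \ ball y ρ, ENNReal.ofReal (‖x - y‖ ^ s) ∂μ :=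
        lintegral_mono_set (by intro x hx; by_cases h : x ∈ ball y ρ <;> simp [h, hx])
    _ ≤ ∫⁻ x in ball y ρ, ENNReal.ofReal (‖x - y‖ ^ s) ∂μ +
          ∫⁻ x in A \ ball y ρ, ENNReal.ofReal (‖x - y‖ ^ s) ∂μ := lintegral_union_le _ _ _
    _ ≤ ∫⁻ x in ball (0 : G) ρ, ENNReal.ofReal (‖x‖ ^ s) ∂μ +
          ∫⁻ _ in A \ ball y ρ, ENNReal.ofReal (ρ ^ s) ∂μ := by
        rw [hnear]
        exact add_le_add_right (setLIntegral_mono' (hA.diff measurableSet_ball) hfar) _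
    _ ≤ ∫⁻ x in ball (0 : G) ρ, ENNReal.ofReal (‖x‖ ^ s) ∂μ + ENNReal.ofReal (ρ ^ s) * μ A := by
        rw [setLIntegral_const]
        gcongr
        exact sdiff_subset

end Translation

section AddHaar

variable {E : Type*} [NormedAddCommGroup E] [NormedSpace ℝ E] [FiniteDimensional ℝ E]
  [MeasurableSpace E] [BorelSpace E] (μ : Measure E) [μ.IsAddHaarMeasure]

theorem lintegral_comp_smul_of_pos (f : E → ℝ≥0∞) {r : ℝ} (hr : 0 < r) :
    ∫⁻ x, f (r • x) ∂μ = (ENNReal.ofReal (r ^ finrank ℝ E))⁻¹ * ∫⁻ x, f x ∂μ := by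
  let e : E ≃ᵐ E := (Homeomorph.smul (Units.mk0 r hr.ne')).toMeasurableEquiv
  rw [← ENNReal.ofReal_inv_of_pos (by positivity), ← abs_of_pos (inv_pos.2 (pow_pos hr _)),
    ← smul_eq_mul, ← lintegral_smul_measure, ← Measure.map_addHaar_smul μ hr.ne']
  exact (lintegral_map_equiv f e).symm

theorem setLIntegral_ball_rpow_norm (s : ℝ) {r : ℝ} (hr : 0 < r) :
    ∫⁻ x in ball (0 : E) r, ENNReal.ofReal (‖x‖ ^ s) ∂μ =
      ENNReal.ofReal (r ^ (s + finrank ℝ E)) *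
        ∫⁻ x in ball (0 : E) 1, ENNReal.ofReal (‖x‖ ^ s) ∂μ := by
  let g : E → ℝ≥0∞ := fun x => ENNReal.ofReal (‖x‖ ^ s)
  have hscale : ∀ x : E, (ball (0 : E) r).indicator g (r • x) =
      ENNReal.ofReal (r ^ s) * (ball (0 : E) 1).indicator g x := by
    intro x
    have hmem : r • x ∈ ball (0 : E) r ↔ x ∈ ball (0 : E) 1 := by
      simp [norm_smul, abs_of_pos hr, hr]
    by_cases hx : x ∈ ball (0 : E) 1
    · rw [indicator_of_mem (hmem.2 hx), indicator_of_mem hx, ← ENNReal.ofReal_mul (by positivity)]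
      simp only [g]
      rw [norm_smul, Real.norm_of_nonneg hr.le, Real.mul_rpow hr.le (norm_nonneg x)]
    · rw [indicator_of_notMem (hmem.not.2 hx), indicator_of_notMem hx, mul_zero]
  have h := lintegral_comp_smul_of_pos μ ((ball (0 : E) r).indicator g) hr
  simp only [hscale, lintegral_const_mul' _ _ ENNReal.ofReal_ne_top,
    lintegral_indicator measurableSet_ball] at h
  have hrd : ENNReal.ofReal (r ^ finrank ℝ E) ≠ 0 := by simp [hr]
  rw [← ENNReal.div_eq_inv_mul, ENNReal.eq_div_iff hrd ENNReal.ofReal_ne_top] at h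
  rw [← h, ← mul_assoc, ← ENNReal.ofReal_mul (by positivity), ← Real.rpow_natCast,
    ← Real.rpow_add hr, add_comm]

theorem setLIntegral_ball_rpow_norm_lt_top (hd : 1 ≤ finrank ℝ E) {s : ℝ}
    (hs : -(finrank ℝ E : ℝ) < s) (r : ℝ) :
    ∫⁻ x in ball (0 : E) r, ENNReal.ofReal (‖x‖ ^ s) ∂μ < ∞ := by
  refine Integrable.lintegral_lt_top (integrableOn_ball_of_norm_le_rpow (C := 1) (α := -s) hd
    (by linarith) (ae_of_all _ fun x => ?_) (measurable_norm.pow_const s).aestronglyMeasurable)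
  rw [neg_neg, one_mul, Real.norm_of_nonneg (by positivity)]

theorem addHaar_annulus [Nontrivial E] {r₁ r₂ : ℝ} (h₁ : 0 ≤ r₁) (h₁₂ : r₁ ≤ r₂) :
    μ {x : E | r₁ ≤ ‖x‖ ∧ ‖x‖ ≤ r₂} =
      ENNReal.ofReal (r₂ ^ finrank ℝ E - r₁ ^ finrank ℝ E) * μ (ball 0 1) := by
  have hset : {x : E | r₁ ≤ ‖x‖ ∧ ‖x‖ ≤ r₂} = closedBall 0 r₂ \ ball 0 r₁ := by
    ext x
    simp [and_comm]
  rw [hset, measure_sdiff (ball_subset_closedBall.trans (closedBall_subset_closedBall h₁₂))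
      measurableSet_ball.nullMeasurableSet measure_ball_lt_top.ne,
    Measure.addHaar_closedBall μ _ (h₁.trans h₁₂), Measure.addHaar_ball μ _ h₁, ← ENNReal.sub_mul
      (fun _ _ => measure_ball_lt_top.ne), ← ENNReal.ofReal_sub _ (by positivity)]

end AddHaar

theorem lintegral_lintegral_mul_le {α β : Type*} [MeasurableSpace α] [MeasurableSpace β]
    {μ : Measure α} {ν : Measure β} [SFinite μ] [SFinite ν] {k : α → β → ℝ≥0∞}
    (hk : Measurable (Function.uncurry k)) {w : β → ℝ≥0∞} (hw : Measurable w) {M : ℝ≥0∞}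
    (hM : ∀ y, ∫⁻ x, k x y ∂μ ≤ M) :
    ∫⁻ x, ∫⁻ y, k x y * w y ∂ν ∂μ ≤ M * ∫⁻ y, w y ∂ν := by
  rw [lintegral_lintegral_swap (hk.mul (hw.comp measurable_snd)).aemeasurable,
    ← lintegral_const_mul _ hw]
  refine lintegral_mono fun y => ?_
  have hky : Measurable fun x => k x y := hk.comp measurable_prodMk_right
  rw [lintegral_mul_const _ hky]
  exact mul_le_mul_left (hM y) _

theorem lintegral_enorm_le_of_support_subset {α F : Type*} [MeasurableSpace α]
    {μ : Measure α} [NormedAddCommGroup F] {p : ℝ} (hp : 1 ≤ p) {f : α → F}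
    (hf : AEStronglyMeasurable f μ) {s : Set α} (hs : f.support ⊆ s) :
    ∫⁻ x, ‖f x‖ₑ ∂μ ≤ eLpNorm f (ENNReal.ofReal p) μ * μ s ^ (1 - p⁻¹) := by
  have h := eLpNorm_le_eLpNorm_mul_rpow_measure_univ (p := 1) (q := ENNReal.ofReal p)
    (by simpa using hp) (hf.restrict (s := s))
  rwa [Measure.restrict_apply_univ, eLpNorm_restrict_eq_of_support_subset hs,
    eLpNorm_restrict_eq_of_support_subset hs, eLpNorm_one_eq_lintegral_enorm,
    ENNReal.toReal_ofReal (by linarith), ENNReal.toReal_one, div_one, one_div] at h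

theorem lintegral_enorm_le_rpow_of_support_subset {α F : Type*} [MeasurableSpace α]
    {μ : Measure α} [NormedAddCommGroup F] {p : ℝ} (hp : 1 ≤ p) {f : α → F}
    (hf : AEStronglyMeasurable f μ) (hfp : eLpNorm f (ENNReal.ofReal p) μ ≤ 1) {s : Set α}
    (hs : f.support ⊆ s) {τ : ℝ} (hτ : 0 ≤ τ) (hsτ : μ s ≤ ENNReal.ofReal τ) :
    ∫⁻ x, ‖f x‖ₑ ∂μ ≤ ENNReal.ofReal (τ ^ (1 - p⁻¹)) := by
  have hexp : 0 ≤ 1 - p⁻¹ := sub_nonneg.2 (inv_le_one_of_one_le₀ hp)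
  calc ∫⁻ x, ‖f x‖ₑ ∂μ ≤ eLpNorm f (ENNReal.ofReal p) μ * μ s ^ (1 - p⁻¹) :=
        lintegral_enorm_le_of_support_subset hp hf hs
    _ ≤ 1 * ENNReal.ofReal τ ^ (1 - p⁻¹) := by gcongr
    _ = ENNReal.ofReal (τ ^ (1 - p⁻¹)) := by rw [one_mul, ENNReal.ofReal_rpow_of_nonneg hτ hexp]

section Convolution

variable {n : ℕ} {K f : EuclideanSpace ℝ (Fin n) → ℝ}

theorem measurable_conv (hK : Measurable K) (hf : Measurable f) : Measurable (conv K f) :=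
  ((hK.comp (measurable_fst.sub measurable_snd)).mul
    (hf.comp measurable_snd)).stronglyMeasurable.integral_prod_right'.measurable

variable [NeZero n] {H s : ℝ}

theorem enorm_conv_le (hH : 0 ≤ H) (hK : ∀ x, x ≠ 0 → |K x| ≤ H * ‖x‖ ^ s)
    (x : EuclideanSpace ℝ (Fin n)) :
    ‖conv K f x‖ₑ ≤ ENNReal.ofReal H * ∫⁻ y, ENNReal.ofReal (‖x - y‖ ^ s) * ‖f y‖ₑ := by
  rw [← lintegral_const_mul' _ _ ENNReal.ofReal_ne_top]
  refine (enorm_integral_le_lintegral_enorm _).trans (lintegral_mono_ae ?_)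
  filter_upwards [compl_mem_ae_iff.2 (measure_singleton x)] with y hy
  have hxy : x - y ≠ 0 := sub_ne_zero.2 (Ne.symm hy)
  rw [enorm_mul, ← mul_assoc, ← ENNReal.ofReal_mul hH, Real.enorm_eq_ofReal_abs]
  gcongr
  exact hK _ hxy

theorem setLIntegral_enorm_conv_le (hH : 0 ≤ H) (hs : s ≤ 0)
    (hK : ∀ x, x ≠ 0 → |K x| ≤ H * ‖x‖ ^ s) (hf : Measurable f)
    {A : Set (EuclideanSpace ℝ (Fin n))} (hA : MeasurableSet A) {ρ : ℝ} (hρ : 0 < ρ) :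
    ∫⁻ x in A, ‖conv K f x‖ₑ ≤ ENNReal.ofReal H *
      (((∫⁻ x in ball (0 : EuclideanSpace ℝ (Fin n)) ρ, ENNReal.ofReal (‖x‖ ^ s)) +
        ENNReal.ofReal (ρ ^ s) * volume A) * ∫⁻ y, ‖f y‖ₑ) := by
  calc ∫⁻ x in A, ‖conv K f x‖ₑ
      ≤ ∫⁻ x in A, ENNReal.ofReal H * ∫⁻ y, ENNReal.ofReal (‖x - y‖ ^ s) * ‖f y‖ₑ :=
        lintegral_mono (enorm_conv_le hH hK)
    _ = ENNReal.ofReal H * ∫⁻ x in A, ∫⁻ y, ENNReal.ofReal (‖x - y‖ ^ s) * ‖f y‖ₑ :=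
        lintegral_const_mul' _ _ ENNReal.ofReal_ne_top
    _ ≤ _ := by
        gcongr
        exact lintegral_lintegral_mul_le (by fun_prop) hf.enorm
          fun y => setLIntegral_rpow_norm_sub_le volume hs hA y hρ

theorem setIntegral_abs_conv_le (hH : 0 ≤ H) (hs : s ≤ 0) (hsn : -(n : ℝ) < s)
    (hK : Measurable K) (hKb : ∀ x, x ≠ 0 → |K x| ≤ H * ‖x‖ ^ s) (hf : Measurable f) {L : ℝ}
    (hL : 0 ≤ L) (hfL : ∫⁻ y, ‖f y‖ₑ ≤ ENNReal.ofReal L) {A : Set (EuclideanSpace ℝ (Fin n))}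
    (hA : MeasurableSet A) (hA_fin : volume A ≠ ∞) {ρ : ℝ} (hρ : 0 < ρ) :
    ∫ x in A, |conv K f x| ≤ H * (ρ ^ (s + n) * (∫⁻ x in ball (0 : EuclideanSpace ℝ (Fin n)) 1,
      ENNReal.ofReal (‖x‖ ^ s)).toReal + ρ ^ s * volume.real A) * L := by
  have hball := setLIntegral_ball_rpow_norm (volume : Measure (EuclideanSpace ℝ (Fin n))) s hρ
  have hfin := setLIntegral_ball_rpow_norm_lt_top (volume : Measure (EuclideanSpace ℝ (Fin n)))
    (by simp [Nat.one_le_iff_ne_zero, NeZero.ne n]) (by simpa using hsn) 1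
  rw [finrank_euclideanSpace_fin] at hball
  rw [integral_eq_lintegral_of_nonneg_ae (ae_of_all _ fun _ => abs_nonneg _)
    (measurable_conv hK hf).abs.aestronglyMeasurable]
  simp_rw [← Real.enorm_eq_ofReal_abs]
  refine ENNReal.toReal_le_of_le_ofReal (by positivity) ?_
  refine (setLIntegral_enorm_conv_le hH hs hKb hf hA hρ).trans ?_
  rw [hball, ENNReal.ofReal_mul (by positivity), ENNReal.ofReal_mul hH,
    ENNReal.ofReal_add (by positivity) (by positivity), ENNReal.ofReal_mul (by positivity),
    ENNReal.ofReal_mul (by positivity), ENNReal.ofReal_toReal hfin.ne,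
    ofReal_measureReal hA_fin, mul_assoc]
  gcongr

end Convolution

/-- Average of `|Tf|` over the annulus `{R ≤ |x| ≤ 2R}` for kernels bounded by
`H |x|^{α-n}`, when `f` is supported in a set of measure at most `τ` with
`‖f‖_{n/α} ≤ 1`. -/
theorem annulus_average_bound
    (n : ℕ) (hn : 1 ≤ n) (α H : ℝ) (hα : 0 < α) (hαn : α < n) (hH : 0 < H)
    (K : EuclideanSpace ℝ (Fin n) → ℝ) (hK : Measurable K)
    (hKb : ∀ x : EuclideanSpace ℝ (Fin n), x ≠ 0 → |K x| ≤ H * ‖x‖ ^ (α - (n : ℝ))) :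
    ∃ C > (0 : ℝ), ∀ τ > (0 : ℝ), ∀ f : EuclideanSpace ℝ (Fin n) → ℝ, Measurable f →
      (∃ S : Set (EuclideanSpace ℝ (Fin n)), MeasurableSet S ∧
        volume S ≤ ENNReal.ofReal τ ∧ Function.support f ⊆ S) →
      eLpNorm f (ENNReal.ofReal ((n : ℝ) / α)) volume ≤ 1 →
      ∀ R > (0 : ℝ),
        (volume {x : EuclideanSpace ℝ (Fin n) | R ≤ ‖x‖ ∧ ‖x‖ ≤ 2 * R}).toReal⁻¹ *
            (∫ x in {x : EuclideanSpace ℝ (Fin n) | R ≤ ‖x‖ ∧ ‖x‖ ≤ 2 * R}, |conv K f x|)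
          ≤ C * R ^ (α - (n : ℝ)) * τ ^ (((n : ℝ) - α) / (n : ℝ)) := by
  have : NeZero n := ⟨by omega⟩
  set c := ∫⁻ x in ball (0 : EuclideanSpace ℝ (Fin n)) 1, ENNReal.ofReal (‖x‖ ^ (α - n))
  set b := volume.real (ball (0 : EuclideanSpace ℝ (Fin n)) 1)
  have hb : 0 < b := ENNReal.toReal_pos (measure_ball_pos _ _ one_pos).ne' measure_ball_lt_top.ne
  have h2n : (0 : ℝ) < 2 ^ n - 1 := by linarith [one_lt_pow₀ one_lt_two (M₀ := ℝ) (NeZero.ne n)]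
  refine ⟨H * (c.toReal / ((2 ^ n - 1) * b) + 1), by positivity, ?_⟩
  rintro τ hτ f hf ⟨S, -, hSτ, hfS⟩ hfp R hR
  set A := {x : EuclideanSpace ℝ (Fin n) | R ≤ ‖x‖ ∧ ‖x‖ ≤ 2 * R}
  have hL1 : ∫⁻ y, ‖f y‖ₑ ≤ ENNReal.ofReal (τ ^ (((n : ℝ) - α) / n)) := by
    have hβ : 1 - ((n : ℝ) / α)⁻¹ = (n - α) / n := by field_simp
    exact hβ ▸ lintegral_enorm_le_rpow_of_support_subset ((one_le_div hα).2 hαn.le)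
      hf.aestronglyMeasurable hfp hfS hτ.le hSτ
  have hvol : volume A = ENNReal.ofReal ((2 ^ n - 1) * R ^ n * b) := by
    rw [addHaar_annulus volume hR.le (by linarith), finrank_euclideanSpace_fin,
      ENNReal.ofReal_mul (by positivity), ofReal_measureReal]
    ring_nf
  have hA : MeasurableSet A := ((isClosed_le continuous_const continuous_norm).inter
    (isClosed_le continuous_norm continuous_const)).measurableSet
  have hint := setIntegral_abs_conv_le hH.le (by linarith) (by linarith) hK hKb hf
    (by positivity) hL1 hA (by simp [hvol]) hR
  rw [sub_add_cancel, measureReal_def] at hint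
  calc (volume A).toReal⁻¹ * ∫ x in A, |conv K f x|
      ≤ (volume A).toReal⁻¹ *
          (H * (R ^ α * c.toReal + R ^ (α - n) * (volume A).toReal) * τ ^ (((n : ℝ) - α) / n)) :=
        mul_le_mul_of_nonneg_left hint (by positivity)
    _ = H * (c.toReal / ((2 ^ n - 1) * b) + 1) * R ^ (α - n) * τ ^ (((n : ℝ) - α) / n) := by
        rw [hvol, ENNReal.toReal_ofReal (by positivity), Real.rpow_sub hR, Real.rpow_natCast]
        field_simp
end
end
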